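/- Let N ≥ 1, let R be a commutative ring, and let A be the evolution algebra over R on the finite basis x_1, …, x_N with structure coefficient matrix C. For α = (a_1, …, a_N) ∈ R^N, let C_α denote the N×N matrix whose (k,i)-entry is a_i · C(k,i). Then for the element a = ∑_i a_i x_i and every n ≥ 2, the coordinate vector of the principal power a^n (with respect to the basis x_1, …, x_N) equals C_α^{n-1} applied to the vector α, i.e. a^n = (x_1, …, x_N) C_α^{n-1} α^T. -/
import Mathlib


open Matrix

/-!
Finite-dimensional evolution algebra over a commutative ring `R` on the basis
`x_1, …, x_N` (the standard basis of `Fin N → R`), with structure coefficient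
matrix `C`: `x_i · x_i = ∑_k C(k,i) • x_k` and `x_i · x_j = 0` for `i ≠ j`;
concretely `(a · b)(k) = ∑_i a(i) * b(i) * C(k,i)`.
-/
def evolMulFin {R : Type*} [CommRing R] {N : ℕ} (C : Matrix (Fin N) (Fin N) R)
    (a b : Fin N → R) : Fin N → R :=
  fun k => ∑ i, a i * b i * C k i

/-- Principal powers: `ppow mul a n = aⁿ` for `n ≥ 1`, defined by
`a^1 = a` and `a^{n+1} = a^n · a`. -/
def ppow {A : Type*} (mul : A → A → A) (a : A) : ℕ → A
  | 0 => a
  | 1 => a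
  | n + 2 => mul (ppow mul a (n + 1)) a

/-- For `α ∈ R^N`, let `C_α` be the matrix with `(k,i)`-entry
`α i * C k i`.  For the element `a = ∑ i, α i • x_i` (whose coordinate vector is
`α`) and every `n ≥ 2`, the principal power `aⁿ` has coordinate vector
`C_α^{n-1} ⬝ α`. -/
theorem principal_power_coords {R : Type*} [CommRing R] {N : ℕ} (hN : 1 ≤ N)
    (C : Matrix (Fin N) (Fin N) R) (α : Fin N → R) (n : ℕ) (hn : 2 ≤ n) :
    ppow (evolMulFin C) α n
      = (Matrix.of fun k i => α i * C k i) ^ (n - 1) *ᵥ α := by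
  have key : ∀ v : Fin N → R, evolMulFin C v α
      = (Matrix.of fun k i => α i * C k i) *ᵥ v := by
    intro v
    funext k
    simp [evolMulFin, Matrix.mulVec, dotProduct]
    exact Finset.sum_congr rfl fun i _ => by ring
  induction n, hn using Nat.le_induction with
  | base => simp [ppow, key, pow_one]
  | succ n hn ih =>
    have h2 : n + 1 - 1 = n - 1 + 1 := by omega
    obtain ⟨m, rfl⟩ : ∃ m, n = m + 2 := ⟨n - 2, by omega⟩
    show evolMulFin C (ppow (evolMulFin C) α (m + 2)) α = _
    rw [key, ih, h2, pow_succ', Matrix.mulVec_mulVec]
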